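/- For every a ∈ W_n(K)^× there exists y ∈ W_n(K^sep)^× with 𝔮(y) = a; any two such solutions generate the same subfield of K^sep, so the field K(𝔮^{-1}a) is well defined; the extension K(𝔮^{-1}a)/K is a finite Galois extension; and if a ≡ b modulo 𝔮W_n(K)^×, then K(𝔮^{-1}a) = K(𝔮^{-1}b). -/

import Mathlib

noncomputable section

open WittVector

/-- Componentwise map on truncated Witt vectors induced by a ring homomorphism. -/
noncomputable def TruncatedWittVector.mapRingHom (p n : ℕ) [hp : Fact p.Prime]
    {R S : Type*} [CommRing R] [CommRing S] (f : R →+* S) :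
    TruncatedWittVector p n R →+* TruncatedWittVector p n S :=
  RingHom.liftOfRightInverse (WittVector.truncate n) TruncatedWittVector.out
    (fun x => x.truncateFun_out)
    ⟨(WittVector.truncate n).comp (WittVector.map f), by
      intro x hx
      rw [RingHom.mem_ker] at hx ⊢
      rw [RingHom.comp_apply, ← RingHom.mem_ker, WittVector.mem_ker_truncate]
      rw [← RingHom.mem_ker, WittVector.mem_ker_truncate] at hx
      intro i hi
      rw [WittVector.map_coeff, hx i hi, map_zero]⟩

/-- The map `𝔮 x = F(x) · x⁻¹` on the unit group of truncated Witt vectors,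
where `F` is the (componentwise `p`-th power) Frobenius. -/
noncomputable def wittQ (p n : ℕ) [Fact p.Prime] (R : Type*) [CommRing R] [CharP R p] :
    (TruncatedWittVector p n R)ˣ →* (TruncatedWittVector p n R)ˣ :=
  (Units.map (TruncatedWittVector.mapRingHom p n (frobenius R p)).toMonoidHom) /
    (MonoidHom.id _)

/-- The map `𝔮 x = F(x) · x⁻¹` on the unit group of (full) Witt vectors. -/
noncomputable def wittQFull (p : ℕ) [Fact p.Prime] (R : Type*) [CommRing R] [CharP R p] :
    (WittVector p R)ˣ →* (WittVector p R)ˣ :=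
  (Units.map (WittVector.map (frobenius R p)).toMonoidHom) / (MonoidHom.id _)

/-- The unit-group homomorphism `W_n(K)ˣ → W_n(L)ˣ` induced by an algebra map. -/
noncomputable def wittIncl (p n : ℕ) [Fact p.Prime] (K L : Type*) [CommRing K] [CommRing L]
    [Algebra K L] : (TruncatedWittVector p n K)ˣ →* (TruncatedWittVector p n L)ˣ :=
  Units.map (TruncatedWittVector.mapRingHom p n (algebraMap K L)).toMonoidHom

/-- The subfield `K(y₀, …, y_{n-1})` of `Ω` generated over `K` by the components of a
truncated Witt vector `y` over `Ω`. -/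
noncomputable def wittGenField (p n : ℕ) (K Ω : Type*) [Field K] [Field Ω] [Algebra K Ω]
    (y : TruncatedWittVector p n Ω) : IntermediateField K Ω :=
  IntermediateField.adjoin K (Set.range fun i => y.coeff i)

/-!
Write `𝔮 y = a` as `F y = a · y`. Over a separably closed field a solution is built one
coefficient at a time: `y₀` solves `y₀ ^ (p - 1) = a₀`, and each later coefficient is a root of a
polynomial `α X ^ p - β X + γ` with `β ≠ 0`, which is separable.

If `a = b · 𝔮 c` and `𝔮 y = a`, `𝔮 z = b`, then `y = z · c · u` with `𝔮 u = 1`, i.e. `F u = u`;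
the coefficients of `u` are roots of `X ^ p - X`, so they lie in the prime field. Witt vectors
with coefficients in an intermediate field `E` form a subring, so `K(y) ⊆ K(z)`, and by symmetry
equality. Every `σ ∈ Gal(Kˢᵉᵖ/K)` maps a solution to a solution, hence fixes `K(y)`, which is
therefore normal.
-/

namespace TruncatedWittVector

variable {p n : ℕ} [Fact p.Prime] {R S T : Type*} [CommRing R] [CommRing S] [CommRing T]

theorem mapRingHom_truncate (f : R →+* S) (x : WittVector p R) :
    mapRingHom p n f (WittVector.truncate n x) = WittVector.truncate n (WittVector.map f x) :=
  RingHom.liftOfRightInverse_comp_apply _ _ _ _ x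

@[simp]
theorem coeff_mapRingHom (f : R →+* S) (x : TruncatedWittVector p n R) (i : Fin n) :
    (mapRingHom p n f x).coeff i = f (x.coeff i) := by
  obtain ⟨x, rfl⟩ := WittVector.truncate_surjective (p := p) n R x
  rw [mapRingHom_truncate, WittVector.coeff_truncate, WittVector.coeff_truncate,
    WittVector.map_coeff]

theorem mapRingHom_mapRingHom (g : S →+* T) (f : R →+* S) (x : TruncatedWittVector p n R) :
    mapRingHom p n g (mapRingHom p n f x) = mapRingHom p n (g.comp f) x :=
  ext fun i => by simp

theorem mem_range_mapRingHom_iff (f : R →+* S) (x : TruncatedWittVector p n S) :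
    x ∈ (mapRingHom p n f).range ↔ ∀ i, x.coeff i ∈ f.range := by
  refine ⟨?_, fun h => ?_⟩
  · rintro ⟨x, rfl⟩ i
    exact ⟨x.coeff i, (coeff_mapRingHom f x i).symm⟩
  · choose c hc using h
    exact ⟨mk p c, ext fun i => by rw [coeff_mapRingHom, coeff_mk, hc]⟩

theorem isUnit_coeff_zero_of_isUnit_truncate (hn : 0 < n) {x : WittVector p R}
    (hx : IsUnit (WittVector.truncate n x)) : IsUnit (x.coeff 0) := by
  obtain ⟨y, hy⟩ := WittVector.truncate_surjective (p := p) n R ↑hx.unit⁻¹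
  have hxy : WittVector.truncate n (x * y) = WittVector.truncate n 1 := by
    rw [map_mul, map_one, hy, hx.mul_val_inv]
  have h0 := congrArg (coeff ⟨0, hn⟩) hxy
  rw [WittVector.coeff_truncate, WittVector.coeff_truncate, WittVector.mul_coeff_zero,
    WittVector.one_coeff_zero] at h0
  exact IsUnit.of_mul_eq_one _ h0

end TruncatedWittVector

open TruncatedWittVector

section WittQ

variable {p n : ℕ} [Fact p.Prime] {R S : Type*} [CommRing R] [CommRing S] [CharP R p] [CharP S p]

theorem wittQ_eq_iff (u a : (TruncatedWittVector p n R)ˣ) :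
    wittQ p n R u = a ↔ Units.map (mapRingHom p n (frobenius R p)).toMonoidHom u = a * u :=
  div_eq_iff_eq_mul

theorem wittQ_map (f : R →+* S) (u : (TruncatedWittVector p n R)ˣ) :
    wittQ p n S (Units.map (mapRingHom p n f).toMonoidHom u)
      = Units.map (mapRingHom p n f).toMonoidHom (wittQ p n R u) := by
  have hcomm (x : TruncatedWittVector p n R) : mapRingHom p n (frobenius S p) (mapRingHom p n f x)
      = mapRingHom p n f (mapRingHom p n (frobenius R p) x) := by
    rw [mapRingHom_mapRingHom, mapRingHom_mapRingHom, f.frobenius_comm]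
  simp only [wittQ, MonoidHom.div_apply, MonoidHom.id_apply, _root_.map_div]
  congr 1
  exact Units.ext (hcomm _)

theorem wittQ_wittIncl {K L : Type*} [Field K] [Field L] [Algebra K L] [CharP K p] [CharP L p]
    (c : (TruncatedWittVector p n K)ˣ) :
    wittQ p n L (wittIncl p n K L c) = wittIncl p n K L (wittQ p n K c) :=
  wittQ_map _ c

end WittQ

namespace WittVector

variable {p : ℕ} [hp : Fact p.Prime] {k : Type*} [Field k] [CharP k p] [IsSepClosed k]

theorem exists_pow_mul_eq_mul_of_isSepClosed {a b : k} (ha : a ≠ 0) (hb : b ≠ 0) :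
    ∃ x : k, x ≠ 0 ∧ x ^ p * a = x * b := by
  have : NeZero ((p - 1 : ℕ) : k) := ⟨by
    rw [Nat.cast_sub hp.out.one_le, CharP.cast_eq_zero, zero_sub, Nat.cast_one]
    exact neg_ne_zero.mpr one_ne_zero⟩
  obtain ⟨x, hx⟩ := IsSepClosed.exists_pow_nat_eq (b / a) (p - 1)
  have hx0 : x ≠ 0 := by
    rintro rfl
    rw [zero_pow (Nat.sub_ne_zero_of_lt hp.out.one_lt)] at hx
    exact div_ne_zero hb ha hx.symm
  refine ⟨x, hx0, ?_⟩
  rw [← Nat.sub_add_cancel hp.out.one_le, pow_succ', mul_assoc, hx, div_mul_cancel₀ _ ha]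

-- The equation is that of `RecursionMain.succNthVal_spec'`, which pins down the `(m + 1)`-st
-- coefficient of a solution of `frobenius x * a₁ = x * a₂` given the earlier ones `bs`.
theorem exists_succ_coeff_of_isSepClosed (m : ℕ) (a₁ a₂ : WittVector p k) (bs : Fin (m + 1) → k)
    (ha₂ : a₂.coeff 0 ≠ 0) :
    ∃ x : k, x ^ p * a₁.coeff 0 ^ p ^ (m + 1) + a₁.coeff (m + 1) * (bs 0 ^ p) ^ p ^ (m + 1) +
        nthRemainder p m (fun v => bs v ^ p) (truncateFun (m + 1) a₁) =
      x * a₂.coeff 0 ^ p ^ (m + 1) + a₂.coeff (m + 1) * bs 0 ^ p ^ (m + 1) +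
        nthRemainder p m bs (truncateFun (m + 1) a₂) := by
  obtain ⟨x, hx⟩ := IsSepClosed.exists_root_C_mul_X_pow_add_C_mul_X_add_C' p p
    (a₁.coeff 0 ^ p ^ (m + 1)) (-a₂.coeff 0 ^ p ^ (m + 1))
    (a₁.coeff (m + 1) * (bs 0 ^ p) ^ p ^ (m + 1) +
        nthRemainder p m (fun v => bs v ^ p) (truncateFun (m + 1) a₁) -
      a₂.coeff (m + 1) * bs 0 ^ p ^ (m + 1) - nthRemainder p m bs (truncateFun (m + 1) a₂))
    dvd_rfl hp.out.two_le (neg_ne_zero.mpr (pow_ne_zero _ ha₂))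
  exact ⟨x, by linear_combination hx⟩

/-- The coefficients of `WittVector.frobeniusRotation`, with the roots chosen in a separably
closed rather than an algebraically closed field. -/
noncomputable def frobeniusRotationCoeffOfIsSepClosed {a₁ a₂ : WittVector p k}
    (ha₁ : a₁.coeff 0 ≠ 0) (ha₂ : a₂.coeff 0 ≠ 0) : ℕ → k
  | 0 => (exists_pow_mul_eq_mul_of_isSepClosed ha₁ ha₂).choose
  | m + 1 => (exists_succ_coeff_of_isSepClosed m a₁ a₂
      (fun i => frobeniusRotationCoeffOfIsSepClosed ha₁ ha₂ i.val) ha₂).choose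

theorem exists_frobenius_mul_eq_mul_of_isSepClosed {a₁ a₂ : WittVector p k} (ha₁ : a₁.coeff 0 ≠ 0)
    (ha₂ : a₂.coeff 0 ≠ 0) : ∃ x : WittVector p k, x.coeff 0 ≠ 0 ∧ frobenius x * a₁ = x * a₂ := by
  set c := frobeniusRotationCoeffOfIsSepClosed ha₁ ha₂ with hc
  have hc0 : c 0 ≠ 0 ∧ c 0 ^ p * a₁.coeff 0 = c 0 * a₂.coeff 0 := by
    rw [hc, frobeniusRotationCoeffOfIsSepClosed]
    exact (exists_pow_mul_eq_mul_of_isSepClosed ha₁ ha₂).choose_spec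
  refine ⟨mk p c, hc0.1, ?_⟩
  ext (_ | m)
  · simpa only [mul_coeff_zero, coeff_frobenius_charP, coeff_mk] using hc0.2
  · have hcm := (exists_succ_coeff_of_isSepClosed m a₁ a₂ (fun i => c i.val) ha₂).choose_spec
    rw [hc, ← frobeniusRotationCoeffOfIsSepClosed, ← hc, Fin.val_zero] at hcm
    simp only [nthRemainder_spec, coeff_frobenius_charP, coeff_mk]
    have hF : truncateFun (m + 1) (frobenius (mk p c)) = fun v : Fin (m + 1) => c v ^ p :=
      TruncatedWittVector.ext fun i => by
        rw [coeff_truncateFun, coeff_frobenius_charP, coeff_mk]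
        rfl
    rw [hF]
    exact hcm

end WittVector

theorem exists_wittQ_eq_of_isSepClosed {p n : ℕ} [Fact p.Prime] {k : Type*} [Field k] [CharP k p]
    [IsSepClosed k] (a : (TruncatedWittVector p n k)ˣ) : ∃ y, wittQ p n k y = a := by
  rcases Nat.eq_zero_or_pos n with rfl | hn
  · exact ⟨1, Units.ext (TruncatedWittVector.ext fun i => i.elim0)⟩
  obtain ⟨A, hA⟩ := WittVector.truncate_surjective (p := p) n k ↑a
  have hA0 : A.coeff 0 ≠ 0 :=
    (isUnit_coeff_zero_of_isUnit_truncate hn (hA ▸ a.isUnit)).ne_zero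
  obtain ⟨x, hx0, hx⟩ := WittVector.exists_frobenius_mul_eq_mul_of_isSepClosed
    (WittVector.one_coeff_zero p k ▸ one_ne_zero) hA0
  let X := (WittVector.isUnit_of_coeff_zero_ne_zero x hx0).unit
  refine ⟨Units.map (WittVector.truncate n).toMonoidHom X, (wittQ_eq_iff _ _).mpr (Units.ext ?_)⟩
  rw [mul_one, WittVector.frobenius_eq_map_frobenius] at hx
  simp only [Units.coe_map, Units.val_mul, RingHom.toMonoidHom_eq_coe, MonoidHom.coe_coe,
    IsUnit.unit_spec, X, mapRingHom_truncate, hx, map_mul, hA, mul_comm]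

section GenField

variable {p n : ℕ} [Fact p.Prime] {K Ω : Type*} [Field K] [Field Ω] [Algebra K Ω]

theorem wittGenField_le_iff {y : TruncatedWittVector p n Ω} {E : IntermediateField K Ω} :
    wittGenField p n K Ω y ≤ E ↔ y ∈ (mapRingHom p n (algebraMap E Ω)).range := by
  rw [wittGenField, IntermediateField.adjoin_le_iff, Set.range_subset_iff,
    mem_range_mapRingHom_iff]
  exact forall_congr' fun i => ⟨fun h => ⟨⟨_, h⟩, rfl⟩, fun ⟨e, he⟩ => he ▸ e.2⟩

theorem wittIncl_mem_range (c : (TruncatedWittVector p n K)ˣ) (E : IntermediateField K Ω) :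
    ↑(wittIncl p n K Ω c) ∈ (mapRingHom p n (algebraMap E Ω)).range :=
  ⟨mapRingHom p n (algebraMap K E) c, by
    rw [mapRingHom_mapRingHom, ← IsScalarTower.algebraMap_eq]
    rfl⟩

theorem mem_range_of_wittQ_eq_one [CharP Ω p] {u : (TruncatedWittVector p n Ω)ˣ}
    (hu : wittQ p n Ω u = 1) (E : IntermediateField K Ω) :
    ↑u ∈ (mapRingHom p n (algebraMap E Ω)).range := by
  rw [wittQ_eq_iff, one_mul, Units.ext_iff] at hu
  refine (mem_range_mapRingHom_iff _ _).mpr fun i => ?_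
  have hfix : (u : TruncatedWittVector p n Ω).coeff i ^ p
      = (u : TruncatedWittVector p n Ω).coeff i := by
    conv_rhs => rw [← hu]
    simp [frobenius_def]
  have hbot := (Subfield.mem_bot_iff_pow_eq_self Ω p).mpr hfix
  exact ⟨⟨_, bot_le (a := E.toSubfield) hbot⟩, rfl⟩

variable [CharP K p] [CharP Ω p]

theorem wittGenField_le_of_wittQ_eq {a b c : (TruncatedWittVector p n K)ˣ}
    (habc : a = b * wittQ p n K c) {y z : (TruncatedWittVector p n Ω)ˣ}
    (hy : wittQ p n Ω y = wittIncl p n K Ω a) (hz : wittQ p n Ω z = wittIncl p n K Ω b) :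
    wittGenField p n K Ω ↑y ≤ wittGenField p n K Ω ↑z := by
  set u := (z * wittIncl p n K Ω c)⁻¹ * y
  have hu : wittQ p n Ω u = 1 := by
    rw [map_mul, map_inv, map_mul, hy, hz, wittQ_wittIncl, ← map_mul, ← habc, inv_mul_cancel]
  have hyu : (y : TruncatedWittVector p n Ω) = z * wittIncl p n K Ω c * u := by
    rw [← Units.val_mul, ← Units.val_mul, mul_inv_cancel_left]
  rw [wittGenField_le_iff, hyu]
  exact mul_mem (mul_mem (wittGenField_le_iff.mp le_rfl) (wittIncl_mem_range c _))
    (mem_range_of_wittQ_eq_one hu _)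

theorem wittGenField_eq_of_wittQ_eq {a b c : (TruncatedWittVector p n K)ˣ}
    (habc : a = b * wittQ p n K c) {y z : (TruncatedWittVector p n Ω)ˣ}
    (hy : wittQ p n Ω y = wittIncl p n K Ω a) (hz : wittQ p n Ω z = wittIncl p n K Ω b) :
    wittGenField p n K Ω ↑y = wittGenField p n K Ω ↑z :=
  (wittGenField_le_of_wittQ_eq habc hy hz).antisymm
    (wittGenField_le_of_wittQ_eq (by rw [habc, map_inv, mul_inv_cancel_right]) hz hy)

end GenField

theorem finiteDimensional_wittGenField {p n : ℕ} {K Ω : Type*} [Field K] [Field Ω] [Algebra K Ω]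
    [Algebra.IsIntegral K Ω] (y : TruncatedWittVector p n Ω) :
    FiniteDimensional K (wittGenField p n K Ω y) :=
  IntermediateField.finiteDimensional_adjoin fun x _ => Algebra.IsIntegral.isIntegral x

section Galois

variable {p n : ℕ} [Fact p.Prime] {K Ω : Type*} [Field K] [Field Ω] [Algebra K Ω]

theorem wittGenField_map (σ : Ω →ₐ[K] Ω) (y : TruncatedWittVector p n Ω) :
    (wittGenField p n K Ω y).map σ = wittGenField p n K Ω (mapRingHom p n (σ : Ω →+* Ω) y) := by
  simp only [wittGenField, IntermediateField.adjoin_map, ← Set.range_comp, coeff_mapRingHom]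
  rfl

theorem isGalois_wittGenField [CharP K p] [CharP Ω p] [IsGalois K Ω]
    {a : (TruncatedWittVector p n K)ˣ} {y : (TruncatedWittVector p n Ω)ˣ}
    (hy : wittQ p n Ω y = wittIncl p n K Ω a) : IsGalois K (wittGenField p n K Ω y) := by
  refine isGalois_iff.mpr ⟨Algebra.isSeparable_tower_bot_of_isSeparable K _ Ω,
    IntermediateField.normal_iff_forall_map_le.mpr fun σ => ?_⟩
  have hσa : Units.map (mapRingHom p n (σ : Ω →+* Ω)).toMonoidHom (wittIncl p n K Ω a)
      = wittIncl p n K Ω a :=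
    Units.ext <| (mapRingHom_mapRingHom _ _ _).trans <| by rw [AlgHom.comp_algebraMap]; rfl
  have hσy : wittQ p n Ω (Units.map (mapRingHom p n (σ : Ω →+* Ω)).toMonoidHom y)
      = wittIncl p n K Ω a := by
    rw [wittQ_map, hy, hσa]
  rw [wittGenField_map]
  exact (wittGenField_eq_of_wittQ_eq (c := 1) (by rw [map_one, mul_one]) hσy hy).le

end Galois

/--
For every `a ∈ Wₙ(K)ˣ` there exists `y ∈ Wₙ(Kˢᵉᵖ)ˣ` with `𝔮(y) = a`;
any two such solutions generate the same subfield of `Kˢᵉᵖ`, so the field `K(𝔮⁻¹a)` is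
well defined; the extension `K(𝔮⁻¹a)/K` is a finite Galois extension; and if
`a ≡ b mod 𝔮Wₙ(K)ˣ`, then `K(𝔮⁻¹a) = K(𝔮⁻¹b)`.
-/
theorem stmt_1 (p n : ℕ) [Fact p.Prime] (K Ksep : Type*) [Field K] [CharP K p]
    [Field Ksep] [Algebra K Ksep] [IsSepClosure K Ksep] [CharP Ksep p]
    (a : (TruncatedWittVector p n K)ˣ) :
    (∃ y : (TruncatedWittVector p n Ksep)ˣ,
        wittQ p n Ksep y = wittIncl p n K Ksep a) ∧
    (∀ y z : (TruncatedWittVector p n Ksep)ˣ,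
        wittQ p n Ksep y = wittIncl p n K Ksep a →
        wittQ p n Ksep z = wittIncl p n K Ksep a →
          wittGenField p n K Ksep ↑y = wittGenField p n K Ksep ↑z) ∧
    (∀ y : (TruncatedWittVector p n Ksep)ˣ,
        wittQ p n Ksep y = wittIncl p n K Ksep a →
          FiniteDimensional K ↥(wittGenField p n K Ksep ↑y) ∧
          IsGalois K ↥(wittGenField p n K Ksep ↑y)) ∧
    (∀ b : (TruncatedWittVector p n K)ˣ, (∃ c, a = b * wittQ p n K c) →
        ∀ y z : (TruncatedWittVector p n Ksep)ˣ,
          wittQ p n Ksep y = wittIncl p n K Ksep a →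
          wittQ p n Ksep z = wittIncl p n K Ksep b →
            wittGenField p n K Ksep ↑y = wittGenField p n K Ksep ↑z) := by
  have : IsSepClosed Ksep := IsSepClosure.sep_closed K
  refine ⟨exists_wittQ_eq_of_isSepClosed _, fun y z hy hz => ?_, fun y hy => ?_, ?_⟩
  · exact wittGenField_eq_of_wittQ_eq (c := 1) (by rw [map_one, mul_one]) hy hz
  · exact ⟨finiteDimensional_wittGenField _, isGalois_wittGenField hy⟩
  · rintro b ⟨c, hc⟩ y z hy hz
    exact wittGenField_eq_of_wittQ_eq hc hy hz
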